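/- arXiv:2008.03524 — 2 statements merged into one kernel-verified Lean document; each statement's English description precedes it below -/
import Mathlib

section
/- For every nonnegative integer n and complex t with |t| < 1, t ≠ 0: ₂F₁(1/2, 1; 2 + n; t) = (2(n+1)!/((3/2)_n · √(1-t))) · ((t-1)/t)^{n+1} · [1 - (1/√(1-t)) · ∑_{k=0}^{n} ((1/2)_k / k!) (t/(t-1))^k]. -/
open scoped BigOperators

/-- Pochhammer symbol `(a)_k` on `ℂ`. -/
noncomputable def pochC (a : ℂ) (k : ℕ) : ℂ := ∏ i ∈ Finset.range k, (a + i)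

/-- Gauss hypergeometric series `₂F₁(a,b;c;z)`. -/
noncomputable def hyp2F1 (a b c z : ℂ) : ℂ :=
  ∑' k : ℕ, pochC a k * pochC b k / (pochC c k * (k.factorial : ℂ)) * z ^ k

/-!
Write `F(c) = ₂F₁(1/2, 1; c; z) = ∑ (1/2)_k / (c)_k z^k`. Shifting the summation index gives Gauss's
contiguous relation `(c - 1/2) z F(c + 1) + c (1 - z) F(c) = c`, a first-order recurrence along
`c = 2, 3, …`, and at `c = 2` the binomial series of `√(1 - z)` gives `z F(2) = 2 (1 - √(1 - z))`.
The closed form satisfies the same recurrence and initial value by rational-function identities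
that use only `w² = 1 - t` for `w = √(1 - t)`.
-/

@[simp] lemma pochC_zero (a : ℂ) : pochC a 0 = 1 := Finset.prod_range_zero _

lemma pochC_succ_right (a : ℂ) (k : ℕ) : pochC a (k + 1) = pochC a k * (a + k) :=
  Finset.prod_range_succ _ _

lemma pochC_succ_left (a : ℂ) (k : ℕ) : pochC a (k + 1) = a * pochC (a + 1) k := by
  simp only [pochC, Finset.prod_range_succ', Nat.cast_add, Nat.cast_one, Nat.cast_zero, add_zero]
  rw [mul_comm]; congr 1; exact Finset.prod_congr rfl fun i _ => by ring

lemma pochC_one (k : ℕ) : pochC 1 k = k.factorial := by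
  rw [pochC, ← Finset.prod_range_add_one_eq_factorial]
  push_cast
  exact Finset.prod_congr rfl fun i _ => add_comm _ _

lemma pochC_two (k : ℕ) : pochC 2 k = (k + 1).factorial := by
  rw [← pochC_one, pochC_succ_left, one_add_one_eq_two, one_mul]

lemma add_natCast_ne_zero_of_re_pos {a : ℂ} (ha : 0 < a.re) (i : ℕ) : a + i ≠ 0 := fun h => by
  have := congrArg Complex.re h
  simp only [Complex.add_re, Complex.natCast_re, Complex.zero_re] at this
  linarith [(i.cast_nonneg : (0 : ℝ) ≤ i)]

lemma pochC_ne_zero {a : ℂ} (ha : 0 < a.re) (k : ℕ) : pochC a k ≠ 0 :=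
  Finset.prod_ne_zero_iff.mpr fun i _ => add_natCast_ne_zero_of_re_pos ha i

lemma norm_pochC_le {x : ℝ} {c : ℂ} (hx : 0 ≤ x) (hxc : x ≤ c.re) (k : ℕ) :
    ‖pochC x k‖ ≤ ‖pochC c k‖ := by
  simp only [pochC, norm_prod]
  refine Finset.prod_le_prod (fun _ _ => norm_nonneg _) fun i _ => ?_
  calc ‖(x : ℂ) + i‖ = x + i := by
        rw [← Complex.ofReal_natCast, ← Complex.ofReal_add, Complex.norm_of_nonneg (by positivity)]
    _ ≤ (c + i).re := by simpa using hxc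
    _ ≤ ‖c + i‖ := Complex.re_le_norm _

lemma summable_pochC_div_pochC_mul_pow {x : ℝ} {c z : ℂ} (hx : 0 ≤ x) (hxc : x ≤ c.re)
    (hz : ‖z‖ < 1) : Summable fun k => pochC x k / pochC c k * z ^ k := by
  refine Summable.of_norm_bounded (summable_geometric_of_lt_one (norm_nonneg z) hz) fun k => ?_
  rw [norm_mul, norm_div, norm_pow]
  exact mul_le_of_le_one_left (by positivity)
    (div_le_one_of_le₀ (norm_pochC_le hx hxc k) (norm_nonneg _))

lemma hyp2F1_one_eq_tsum (a c z : ℂ) :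
    hyp2F1 a 1 c z = ∑' k, pochC a k / pochC c k * z ^ k := by
  refine tsum_congr fun k => ?_
  rw [pochC_one, mul_div_mul_right _ _ (by simp [Nat.factorial_ne_zero])]

lemma pochC_div_pochC_contiguous (a : ℂ) {c : ℂ} (hc : 0 < c.re) (k : ℕ) :
    c * (pochC a (k + 1) / pochC c (k + 1)) =
      c * (pochC a k / pochC c k) - (c - a) * (pochC a k / pochC (c + 1) k) := by
  have hc' : c ≠ 0 := by simpa using add_natCast_ne_zero_of_re_pos hc 0
  have hshift : pochC (c + 1) k = pochC c k * (c + k) / c := by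
    rw [← pochC_succ_right, pochC_succ_left, mul_div_cancel_left₀ _ hc']
  have hpc := pochC_ne_zero hc k
  have hck := add_natCast_ne_zero_of_re_pos hc k
  rw [pochC_succ_right, pochC_succ_right, hshift]
  field_simp
  ring

theorem hyp2F1_one_contiguous {a c z : ℂ} (hc : 0 < c.re)
    (hF : Summable fun k => pochC a k / pochC c k * z ^ k)
    (hG : Summable fun k => pochC a k / pochC (c + 1) k * z ^ k) :
    (c - a) * z * hyp2F1 a 1 (c + 1) z + c * (1 - z) * hyp2F1 a 1 c z = c := by
  rw [hyp2F1_one_eq_tsum, hyp2F1_one_eq_tsum]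
  set F := ∑' k, pochC a k / pochC c k * z ^ k
  set G := ∑' k, pochC a k / pochC (c + 1) k * z ^ k
  have htail : HasSum (fun k => c * (pochC a (k + 1) / pochC c (k + 1) * z ^ (k + 1)))
      (c * F - c) := by
    simpa using (hasSum_nat_add_iff' 1).mpr (hF.hasSum.mul_left c)
  have hrec : HasSum (fun k => c * (pochC a (k + 1) / pochC c (k + 1) * z ^ (k + 1)))
      (z * (c * F - (c - a) * G)) := by
    have hterm : ∀ k : ℕ, c * (pochC a (k + 1) / pochC c (k + 1) * z ^ (k + 1)) =
        z * (c * (pochC a k / pochC c k * z ^ k) - (c - a) * (pochC a k / pochC (c + 1) k * z ^ k)) :=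
      fun k => by rw [pow_succ, ← mul_assoc, ← mul_assoc, pochC_div_pochC_contiguous a hc k]; ring
    simpa only [hterm] using ((hF.hasSum.mul_left c).sub (hG.hasSum.mul_left (c - a))).mul_left z
  linear_combination htail.unique hrec

theorem hasSum_choose_mul_pow {a z : ℂ} (hz : ‖z‖ < 1) :
    HasSum (fun k => Ring.choose a k * z ^ k) ((1 + z) ^ a) := by
  have h := (Complex.one_add_cpow_hasFPowerSeriesOnBall_zero (a := a)).hasSum (y := z)
    (by simpa [← ofReal_norm] using hz)
  simpa [binomialSeries, mul_comm] using h

lemma descPochhammer_smeval_eq_eval {R : Type*} [CommRing R] (k : ℕ) (x : R) :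
    (descPochhammer ℤ k).smeval x = (descPochhammer R k).eval x := by
  rw [← descPochhammer_map (algebraMap ℤ R), Polynomial.eval_map_algebraMap,
    Polynomial.aeval_eq_smeval]

lemma choose_one_half_succ (k : ℕ) :
    Ring.choose (1/2 : ℂ) (k + 1) = (-1) ^ k / 2 * pochC (1/2) k / (k + 1).factorial := by
  have hneg : ∏ i ∈ Finset.range k, (1/2 - ((i + 1 : ℕ) : ℂ)) = (-1) ^ k * pochC (1/2) k :=
    calc ∏ i ∈ Finset.range k, (1/2 - ((i + 1 : ℕ) : ℂ))
        = ∏ i ∈ Finset.range k, -(1/2 + (i : ℂ)) :=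
          Finset.prod_congr rfl fun i _ => by push_cast; ring
      _ = (-1) ^ k * pochC (1/2) k := by rw [Finset.prod_neg, Finset.card_range, pochC]
  rw [Ring.choose_eq_smul, descPochhammer_smeval_eq_eval, descPochhammer_eval_eq_prod_range,
    Finset.prod_range_succ', hneg, smul_eq_mul]
  field_simp
  simp

lemma summable_half_pochC_div_pochC_mul_pow {c z : ℂ} (hc : 1/2 ≤ c.re) (hz : ‖z‖ < 1) :
    Summable fun k => pochC (1/2) k / pochC c k * z ^ k := by
  simpa using summable_pochC_div_pochC_mul_pow (x := 1/2) (by norm_num) hc hz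

theorem hyp2F1_half_one_contiguous {c z : ℂ} (hc : 1/2 ≤ c.re) (hz : ‖z‖ < 1) :
    (c - 1/2) * z * hyp2F1 (1/2) 1 (c + 1) z + c * (1 - z) * hyp2F1 (1/2) 1 c z = c :=
  hyp2F1_one_contiguous (by linarith) (summable_half_pochC_div_pochC_mul_pow hc hz)
    (summable_half_pochC_div_pochC_mul_pow (by simp; linarith) hz)

theorem mul_hyp2F1_half_one_two {z : ℂ} (hz : ‖z‖ < 1) :
    z * hyp2F1 (1/2) 1 2 z = 2 * (1 - (1 - z) ^ (1/2 : ℂ)) := by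
  have hbin := (hasSum_nat_add_iff' 1).mpr (hasSum_choose_mul_pow (a := 1/2) (z := -z) (by simpa))
  have hF := (summable_half_pochC_div_pochC_mul_pow (c := 2) (by norm_num) hz).hasSum.mul_left (-(z/2))
  rw [← hyp2F1_one_eq_tsum] at hF
  have hterm : ∀ k : ℕ, Ring.choose (1/2 : ℂ) (k + 1) * (-z) ^ (k + 1)
      = -(z/2) * (pochC (1/2) k / pochC 2 k * z ^ k) := fun k => by
    have hsq : (-1 : ℂ) ^ k * (-1) ^ k = 1 := by rw [← mul_pow]; norm_num
    rw [choose_one_half_succ, pochC_two, neg_pow z]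
    linear_combination (-(1/2) * pochC (1/2) k / (k + 1).factorial * z ^ (k + 1)) * hsq
  simp only [hterm, Finset.range_one, Finset.sum_singleton, Ring.choose_zero_right, pow_zero,
    mul_one, ← sub_eq_add_neg] at hbin
  linear_combination -2 * hF.unique hbin

noncomputable def closedForm (n : ℕ) (t w : ℂ) : ℂ :=
  2 * ((n + 1).factorial : ℂ) / (pochC (3/2) n * w) * ((t - 1) / t) ^ (n + 1) *
    (1 - 1 / w * ∑ k ∈ Finset.range (n + 1), pochC (1/2) k / (k.factorial : ℂ) * (t / (t - 1)) ^ k)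

lemma closedForm_succ {t w : ℂ} (hw : w * w = 1 - t) (hw0 : w ≠ 0) (ht0 : t ≠ 0) (n : ℕ) :
    (n + 3/2) * t * closedForm (n + 1) t w + (n + 2) * (1 - t) * closedForm n t w = n + 2 := by
  have hXY : (-(w * w) / t) ^ (n + 1) * (t / -(w * w)) ^ (n + 1) = 1 := by
    rw [← mul_pow, div_mul_div_cancel₀', div_self, one_pow] <;> simp [hw0, ht0]
  have hp : pochC (3/2) n ≠ 0 := pochC_ne_zero (by norm_num) n
  -- the form `field_simp` gives to `3/2 + n`
  have hn : (3 + n * 2 : ℂ) ≠ 0 := by norm_cast; omega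
  have hf : ((n + 1).factorial : ℂ) ≠ 0 := by simp [Nat.factorial_ne_zero]
  simp only [closedForm, Finset.sum_range_succ _ (n + 1), pochC_succ_right (3/2) n,
    Nat.factorial_succ (n + 1), pow_succ _ (n + 1), pochC_succ_left (1/2) n, ← hw,
    show t - 1 = -(w * w) by linear_combination hw]
  rw [show (1/2 : ℂ) + 1 = 3/2 by norm_num]
  generalize (-(w * w) / t) ^ (n + 1) = X at hXY ⊢
  generalize (t / -(w * w)) ^ (n + 1) = Y at hXY ⊢
  generalize ∑ k ∈ Finset.range (n + 1), pochC (1 / 2) k / k.factorial * (t / -(w * w)) ^ k = S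
  obtain rfl : Y = X⁻¹ := eq_inv_of_mul_eq_one_right hXY
  have hX0 : X ≠ 0 := left_ne_zero_of_mul_eq_one hXY
  push_cast
  field_simp
  ring

lemma closedForm_zero {t w : ℂ} (hw : w * w = 1 - t) (hw0 : w ≠ 0) (ht0 : t ≠ 0) :
    t * closedForm 0 t w = 2 * (1 - w) := by
  simp only [closedForm, Finset.sum_range_one, pochC_zero, zero_add, pow_one, pow_zero,
    Nat.factorial_zero, Nat.factorial_one, Nat.cast_one, div_one, one_mul, mul_one]
  rw [show t - 1 = -(w * w) by linear_combination hw]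
  field_simp
  ring

lemma cpow_half_mul_self (z : ℂ) : z ^ (1/2 : ℂ) * z ^ (1/2 : ℂ) = z := by
  rw [← sq, one_div, Complex.cpow_ofNat_inv_pow]

theorem reduction_third_diff (n : ℕ) (t : ℂ) (ht : ‖t‖ < 1) (ht0 : t ≠ 0) :
    hyp2F1 (1/2) 1 (2 + n) t =
      2 * ((n + 1).factorial : ℂ) / (pochC (3/2) n * (1 - t) ^ ((1 : ℂ)/2)) *
        ((t - 1) / t) ^ (n + 1) *
        (1 - 1 / (1 - t) ^ ((1 : ℂ)/2) *
          ∑ k ∈ Finset.range (n + 1), pochC (1/2) k / (k.factorial : ℂ) * (t / (t - 1)) ^ k) := by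
  have hw := cpow_half_mul_self (1 - t)
  have hw0 : (1 - t) ^ (1/2 : ℂ) ≠ 0 := fun h => by
    rw [h, zero_mul, eq_comm, sub_eq_zero] at hw
    simp [← hw] at ht
  show _ = closedForm n t _
  induction n with
  | zero =>
    refine mul_left_cancel₀ ht0 ?_
    rw [closedForm_zero hw hw0 ht0]
    simpa using mul_hyp2F1_half_one_two ht
  | succ n ih =>
    have hrec := hyp2F1_half_one_contiguous (c := 2 + n) (by simp; linarith [n.cast_nonneg (α := ℝ)]) ht
    have h32 : (n + 3/2 : ℂ) ≠ 0 := by rw [add_comm]; exact add_natCast_ne_zero_of_re_pos (by norm_num) n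
    refine mul_left_cancel₀ (mul_ne_zero h32 ht0) ?_
    push_cast
    rw [show (2 : ℂ) + (n + 1) = 2 + n + 1 by ring]
    linear_combination hrec - closedForm_succ hw hw0 ht0 n - (n + 2) * (1 - t) * ih
end

section
/- For real z with 0 < z < 1: ₂F₁(1/3, 2/3; -1/2; z) = [(3 - 6z) cos((1/3) arcsin(√z)) + √(z(1-z)) sin((1/3) arcsin(√z))] / (3(1-z)^{3/2}). -/
open scoped BigOperators

/-- Pochhammer symbol `(a)_k` on `ℝ`. -/
noncomputable def pochR (a : ℝ) (k : ℕ) : ℝ := ∏ i ∈ Finset.range k, (a + i)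

/-- Gauss hypergeometric series `₂F₁(a,b;c;z)` on `ℝ`. -/
noncomputable def hyp2F1R (a b c z : ℝ) : ℝ :=
  ∑' k : ℕ, pochR a k * pochR b k / (pochR c k * (k.factorial : ℝ)) * z ^ k

/-!
Put `x = t²`. The odd function `u t = t · ₂F₁(1/3, 2/3; 3/2; t²)` solves
`(1 - t²) u'' - t u' + u / 9 = 0` with `u 0 = 0`, `u' 0 = 1`, and so does `3 sin (arcsin t / 3)`.
Along any solution of this equation the energy `(1 - t²) y'² + y² / 9` is constant, so the two
solutions agree on `(-1, 1)`. Lowering `c` twice by the contiguous relation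
`F(a,b;c) - F(a,b;c+1) = ab x / (c (c+1)) · F(a+1,b+1;c+2)` gives
`₂F₁(1/3, 2/3; -1/2; t²) = u' - t u''`, which the differential equation turns into the closed form.
-/

open Filter Topology Set Real

theorem pochR_zero (a : ℝ) : pochR a 0 = 1 := Finset.prod_range_zero _

theorem pochR_succ_right (a : ℝ) (k : ℕ) : pochR a (k + 1) = pochR a k * (a + k) :=
  Finset.prod_range_succ _ _

theorem pochR_succ_left (a : ℝ) (k : ℕ) : pochR a (k + 1) = a * pochR (a + 1) k := by
  induction k with
  | zero => simp [pochR_succ_right, pochR_zero]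
  | succ k ih => rw [pochR_succ_right, ih, pochR_succ_right]; push_cast; ring

theorem pochR_ne_zero {a : ℝ} (ha : ∀ n : ℕ, a + n ≠ 0) (k : ℕ) : pochR a k ≠ 0 :=
  Finset.prod_ne_zero_iff.mpr fun n _ => ha n

noncomputable def hyp2F1Coeff (a b c : ℝ) (k : ℕ) : ℝ :=
  pochR a k * pochR b k / (pochR c k * (k.factorial : ℝ))

theorem hyp2F1R_eq_tsum (a b c : ℝ) :
    hyp2F1R a b c = fun x => ∑' k, hyp2F1Coeff a b c k * x ^ k := rfl

theorem hyp2F1Coeff_zero (a b c : ℝ) : hyp2F1Coeff a b c 0 = 1 := by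
  simp [hyp2F1Coeff, pochR_zero]

theorem hyp2F1Coeff_succ (a b c : ℝ) (k : ℕ) :
    hyp2F1Coeff a b c (k + 1) =
      (a + k) * (b + k) / ((c + k) * (k + 1)) * hyp2F1Coeff a b c k := by
  simp only [hyp2F1Coeff, pochR_succ_right, Nat.factorial_succ, Nat.cast_mul, Nat.cast_succ,
    div_mul_div_comm]
  ring_nf

theorem succ_mul_hyp2F1Coeff_succ (a b c : ℝ) (k : ℕ) :
    (k + 1) * hyp2F1Coeff a b c (k + 1) =
      a * b / c * hyp2F1Coeff (a + 1) (b + 1) (c + 1) k := by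
  have hk : (k : ℝ) + 1 ≠ 0 := by positivity
  simp only [hyp2F1Coeff, pochR_succ_left, Nat.factorial_succ, Nat.cast_mul, Nat.cast_succ,
    div_mul_div_comm]
  field_simp

theorem mul_hyp2F1Coeff_eq {a b c : ℝ} (hc : ∀ n : ℕ, c + n ≠ 0) (k : ℕ) :
    c * hyp2F1Coeff a b c k = (c + k) * hyp2F1Coeff a b (c + 1) k := by
  have hc₁ : ∀ n : ℕ, c + 1 + n ≠ 0 := fun n => by
    convert hc (n + 1) using 1; push_cast; ring
  have h := pochR_succ_left c k
  rw [pochR_succ_right] at h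
  have := pochR_ne_zero hc k
  have := pochR_ne_zero hc₁ k
  have := hc k
  have : (k.factorial : ℝ) ≠ 0 := by positivity
  simp only [hyp2F1Coeff]
  field_simp
  linear_combination (-(pochR a k * pochR b k)) * h

theorem tendsto_hyp2F1Coeff_ratio (a b c : ℝ) :
    Tendsto (fun k : ℕ => (a + k) * (b + k) / ((c + k) * (k + 1))) atTop (𝓝 1) := by
  have h₁ := tendsto_add_mul_div_add_mul_atTop_nhds a 1 1 (one_ne_zero (α := ℝ))
  have h₂ := tendsto_add_mul_div_add_mul_atTop_nhds b c 1 (one_ne_zero (α := ℝ))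
  simp only [one_mul, div_one] at h₁ h₂
  rw [← mul_one (1 : ℝ)]
  refine (h₁.mul h₂).congr fun k => ?_
  rw [div_mul_div_comm]
  ring

theorem summable_hyp2F1Coeff_mul_pow (a b c : ℝ) {x : ℝ} (hx : |x| < 1) :
    Summable fun k => hyp2F1Coeff a b c k * x ^ k := by
  obtain ⟨r, hxr, hr⟩ := exists_between hx
  refine summable_of_ratio_norm_eventually_le hr ?_
  have hlim : Tendsto (fun k : ℕ => |(a + k) * (b + k) / ((c + k) * (k + 1))| * |x|) atTop
      (𝓝 |x|) := by
    simpa using ((tendsto_hyp2F1Coeff_ratio a b c).abs).mul_const |x|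
  filter_upwards [hlim.eventually_le_const hxr] with k hk
  rw [hyp2F1Coeff_succ, pow_succ, Real.norm_eq_abs, Real.norm_eq_abs, abs_mul, abs_mul,
    abs_mul, abs_mul]
  calc _ = (|(a + k) * (b + k) / ((c + k) * (k + 1))| * |x|) *
        (|hyp2F1Coeff a b c k| * |x ^ k|) := by ring
    _ ≤ r * (|hyp2F1Coeff a b c k| * |x ^ k|) := by gcongr

theorem hasSum_hyp2F1R (a b c : ℝ) {x : ℝ} (hx : |x| < 1) :
    HasSum (fun k => hyp2F1Coeff a b c k * x ^ k) (hyp2F1R a b c x) :=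
  (summable_hyp2F1Coeff_mul_pow a b c hx).hasSum

theorem hyp2F1R_zero (a b c : ℝ) : hyp2F1R a b c 0 = 1 := by
  show ∑' k, hyp2F1Coeff a b c k * 0 ^ k = 1
  rw [tsum_eq_single 0 fun k hk => by simp [hk]]
  simp [hyp2F1Coeff_zero]

theorem hasDerivAt_tsum_mul_pow {a : ℕ → ℝ} {r x : ℝ}
    (ha : Summable fun k : ℕ => (k + 1) * |a (k + 1)| * r ^ k) (hx : |x| < r) :
    HasDerivAt (fun y => ∑' k, a k * y ^ k) (∑' k : ℕ, (k + 1) * a (k + 1) * x ^ k) x := by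
  have hu : Summable fun n : ℕ => n * |a n| * r ^ (n - 1) :=
    (summable_nat_add_iff 1).mp (by simpa using ha)
  have hbound : ∀ n : ℕ, ∀ y ∈ Ioo (-r) r,
      ‖a n * (n * y ^ (n - 1))‖ ≤ n * |a n| * r ^ (n - 1) := by
    intro n y hy
    have hy' : |y| ≤ r := (abs_lt.mpr hy).le
    rw [Real.norm_eq_abs, abs_mul, abs_mul, abs_pow, Nat.abs_cast, mul_left_comm, ← mul_assoc]
    gcongr
  have hxI : x ∈ Ioo (-r) r := abs_lt.mp hx
  have hD := hasDerivAt_tsum_of_isPreconnected (g := fun n y => a n * y ^ n)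
    (g' := fun n y => a n * (n * y ^ (n - 1))) hu isOpen_Ioo (convex_Ioo (-r) r).isPreconnected
    (fun n y _ => (hasDerivAt_pow n y).const_mul (a n)) hbound
    (⟨by linarith [abs_nonneg x], by linarith [abs_nonneg x]⟩ : (0 : ℝ) ∈ Ioo (-r) r)
    (hasSum_single 0 fun n hn => by simp [hn]).summable hxI
  refine hD.congr_deriv ?_
  rw [(Summable.of_norm_bounded hu fun n => hbound n x hxI).tsum_eq_zero_add]
  simp [mul_comm, mul_left_comm]

theorem hasDerivAt_hyp2F1R (a b c : ℝ) {x : ℝ} (hx : |x| < 1) :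
    HasDerivAt (hyp2F1R a b c) (a * b / c * hyp2F1R (a + 1) (b + 1) (c + 1) x) x := by
  obtain ⟨r, hxr, hr⟩ := exists_between hx
  have hr0 : 0 ≤ r := (abs_nonneg x).trans hxr.le
  have hsum : Summable fun k : ℕ => (k + 1) * |hyp2F1Coeff a b c (k + 1)| * r ^ k := by
    refine (((summable_hyp2F1Coeff_mul_pow (a + 1) (b + 1) (c + 1)
      (by rwa [abs_of_nonneg hr0])).abs).mul_left |a * b / c|).congr fun k => ?_
    have h := congrArg abs (succ_mul_hyp2F1Coeff_succ a b c k)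
    rw [abs_mul, abs_mul, abs_of_nonneg (by positivity)] at h
    rw [h, abs_mul, abs_pow, abs_of_nonneg hr0, mul_assoc]
  rw [hyp2F1R_eq_tsum]
  refine (hasDerivAt_tsum_mul_pow hsum hxr).congr_deriv ?_
  simp_rw [succ_mul_hyp2F1Coeff_succ, mul_assoc]
  exact tsum_mul_left

theorem hyp2F1R_sub_hyp2F1R_add_one {a b c x : ℝ} (hc : ∀ n : ℕ, c + n ≠ 0) (hx : |x| < 1) :
    hyp2F1R a b c x - hyp2F1R a b (c + 1) x =
      a * b / (c * (c + 1)) * x * hyp2F1R (a + 1) (b + 1) (c + 2) x := by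
  have hc0 : c ≠ 0 := by simpa using hc 0
  have hdiff : ∀ k : ℕ, hyp2F1Coeff a b c k - hyp2F1Coeff a b (c + 1) k =
      k / c * hyp2F1Coeff a b (c + 1) k := fun k => by
    have := mul_hyp2F1Coeff_eq (a := a) (b := b) hc k
    field_simp
    linear_combination this
  have hs₁ := summable_hyp2F1Coeff_mul_pow a b c hx
  have hs₂ := summable_hyp2F1Coeff_mul_pow a b (c + 1) hx
  simp only [hyp2F1R_eq_tsum]
  rw [← hs₁.tsum_sub hs₂, (hs₁.sub hs₂).tsum_eq_zero_add, ← tsum_mul_left]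
  simp only [← sub_mul, hdiff, Nat.cast_zero, zero_div, zero_mul, zero_add]
  refine tsum_congr fun k => ?_
  have := succ_mul_hyp2F1Coeff_succ a b (c + 1) k
  rw [show c + 1 + 1 = c + 2 by ring] at this
  push_cast
  rw [← div_div]
  linear_combination (x ^ (k + 1) / c) * this

theorem one_sub_sq_pos_of_abs_lt_one {t : ℝ} (ht : |t| < 1) : 0 < 1 - t ^ 2 :=
  sub_pos.mpr ((sq_lt_one_iff_abs_lt_one t).mpr ht)

theorem hasDerivAt_sq (t : ℝ) : HasDerivAt (fun s : ℝ => s ^ 2) (2 * t) t := by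
  simpa using hasDerivAt_pow 2 t

theorem hasDerivAt_hyp2F1R_sq (a b c : ℝ) {t : ℝ} (ht : |t| < 1) :
    HasDerivAt (fun s => hyp2F1R a b c (s ^ 2))
      (a * b / c * hyp2F1R (a + 1) (b + 1) (c + 1) (t ^ 2) * (2 * t)) t := by
  have hx : |t ^ 2| < 1 := by rwa [abs_sq, sq_lt_one_iff_abs_lt_one]
  exact HasDerivAt.comp (h := fun s : ℝ => s ^ 2) t (hasDerivAt_hyp2F1R a b c hx) (hasDerivAt_sq t)

theorem chebyshev_ode_solution_eq_zero {c : ℝ} (hc : 0 < c) {y y' : ℝ → ℝ}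
    (hy : ∀ t, |t| < 1 → HasDerivAt y (y' t) t)
    (hy' : ∀ t, |t| < 1 → HasDerivAt y' ((t * y' t - c * y t) / (1 - t ^ 2)) t)
    (h₀ : y 0 = 0) (h₀' : y' 0 = 0) {t : ℝ} (ht : |t| < 1) :
    y t = 0 ∧ y' t = 0 := by
  set E : ℝ → ℝ := fun s => (1 - s ^ 2) * y' s ^ 2 + c * y s ^ 2
  have hE : ∀ s ∈ Ioo (-1 : ℝ) 1, HasDerivAt E 0 s := fun s hs => by
    have hs' : |s| < 1 := abs_lt.mpr hs
    have hs₁ : 1 - s ^ 2 ≠ 0 := (one_sub_sq_pos_of_abs_lt_one hs').ne'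
    refine (((hasDerivAt_sq s).const_sub 1).mul ((hy' s hs').pow 2)).add
      (((hy s hs').pow 2).const_mul c) |>.congr_deriv ?_
    simp only [Pi.pow_apply]
    field_simp
    ring
  have hconst : E t = E 0 := isOpen_Ioo.is_const_of_deriv_eq_zero isPreconnected_Ioo
    (fun s hs => (hE s hs).differentiableAt.differentiableWithinAt)
    (fun s hs => (hE s hs).deriv) (abs_lt.mp ht) ⟨by norm_num, by norm_num⟩
  have hpos : 0 < 1 - t ^ 2 := one_sub_sq_pos_of_abs_lt_one ht
  have hE₀ : E 0 = 0 := by simp [E, h₀, h₀']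
  rw [hE₀, add_eq_zero_iff_of_nonneg (by positivity) (by positivity)] at hconst
  simpa [hpos.ne', hc.ne', and_comm] using hconst

theorem half_add_natCast_ne_zero (n : ℕ) : (1 / 2 : ℝ) + n ≠ 0 := by positivity

theorem neg_half_add_natCast_ne_zero (n : ℕ) : (-1 / 2 : ℝ) + n ≠ 0 := by
  intro h
  have : ((2 * n : ℕ) : ℝ) = 1 := by push_cast; linarith
  norm_cast at this
  omega

namespace ThirdTwoThirds

theorem hyp2F1Coeff_contiguous (k : ℕ) :
    8 / 9 * hyp2F1Coeff (4/3) (5/3) (3/2) k + hyp2F1Coeff (1/3) (2/3) (3/2) k / 9 +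
      hyp2F1Coeff (1/3) (2/3) (-1/2) k = 2 * hyp2F1Coeff (1/3) (2/3) (1/2) k := by
  have hhalf := mul_hyp2F1Coeff_eq (a := 1/3) (b := 2/3) half_add_natCast_ne_zero k
  have hneg := mul_hyp2F1Coeff_eq (a := 1/3) (b := 2/3) neg_half_add_natCast_ne_zero k
  have hshift := succ_mul_hyp2F1Coeff_succ (1/3) (2/3) (1/2) k
  rw [hyp2F1Coeff_succ] at hshift
  norm_num at hhalf hneg hshift ⊢
  have hp : hyp2F1Coeff (1/3) (2/3) (1/2) k =
      (2 * k + 1) * hyp2F1Coeff (1/3) (2/3) (3/2) k := by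
    linear_combination 2 * hhalf
  have hh : 4 / 9 * hyp2F1Coeff (4/3) (5/3) (3/2) k =
      2 * (1/3 + k) * (2/3 + k) * hyp2F1Coeff (1/3) (2/3) (3/2) k := by
    rw [← hshift, hp]
    field_simp
    ring
  linear_combination 2 * hh - 2 * hneg - (2 * k + 1) * hp

-- Free of index shifts, hence checked coefficientwise; with `hyp2F1R_neg_half` it gives the
-- relation with the factor `1 - x` below.
theorem hyp2F1R_contiguous {x : ℝ} (hx : |x| < 1) :
    8 / 9 * hyp2F1R (4/3) (5/3) (3/2) x + hyp2F1R (1/3) (2/3) (3/2) x / 9 +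
      hyp2F1R (1/3) (2/3) (-1/2) x = 2 * hyp2F1R (1/3) (2/3) (1/2) x := by
  refine HasSum.unique ?_ ((hasSum_hyp2F1R _ _ _ hx).mul_left 2)
  convert (((hasSum_hyp2F1R _ _ _ hx).mul_left (8 / 9)).add
    ((hasSum_hyp2F1R _ _ _ hx).div_const 9)).add (hasSum_hyp2F1R _ _ _ hx) using 1
  funext k
  linear_combination (-x ^ k) * hyp2F1Coeff_contiguous k

theorem hyp2F1R_neg_half {x : ℝ} (hx : |x| < 1) :
    hyp2F1R (1/3) (2/3) (-1/2) x =
      hyp2F1R (1/3) (2/3) (1/2) x - 8 / 9 * x * hyp2F1R (4/3) (5/3) (3/2) x := by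
  have h := hyp2F1R_sub_hyp2F1R_add_one (a := 1/3) (b := 2/3) neg_half_add_natCast_ne_zero hx
  norm_num at h ⊢
  linear_combination h

theorem one_sub_mul_hyp2F1R_four_thirds {x : ℝ} (hx : |x| < 1) :
    8 / 9 * (1 - x) * hyp2F1R (4/3) (5/3) (3/2) x =
      hyp2F1R (1/3) (2/3) (1/2) x - hyp2F1R (1/3) (2/3) (3/2) x / 9 := by
  linear_combination hyp2F1R_contiguous hx - hyp2F1R_neg_half hx

noncomputable def seriesSol (t : ℝ) : ℝ := t * hyp2F1R (1/3) (2/3) (3/2) (t ^ 2)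

noncomputable def seriesSolDeriv (t : ℝ) : ℝ := hyp2F1R (1/3) (2/3) (1/2) (t ^ 2)

noncomputable def closedSol (t : ℝ) : ℝ := 3 * sin (arcsin t / 3)

noncomputable def closedSolDeriv (t : ℝ) : ℝ := cos (arcsin t / 3) / √(1 - t ^ 2)

theorem hasDerivAt_seriesSol {t : ℝ} (ht : |t| < 1) :
    HasDerivAt seriesSol (seriesSolDeriv t) t := by
  have hx : |t ^ 2| < 1 := by rwa [abs_sq, sq_lt_one_iff_abs_lt_one]
  have hG := hasDerivAt_hyp2F1R_sq (1/3) (2/3) (3/2) ht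
  have hL := hyp2F1R_sub_hyp2F1R_add_one (a := 1/3) (b := 2/3) half_add_natCast_ne_zero hx
  norm_num at hG hL
  refine ((hasDerivAt_id t).mul hG).congr_deriv ?_
  rw [seriesSolDeriv, id, one_mul]
  linear_combination -hL

theorem hasDerivAt_seriesSolDeriv {t : ℝ} (ht : |t| < 1) :
    HasDerivAt seriesSolDeriv ((t * seriesSolDeriv t - seriesSol t / 9) / (1 - t ^ 2)) t := by
  have hx : |t ^ 2| < 1 := by rwa [abs_sq, sq_lt_one_iff_abs_lt_one]
  have h₁ : 1 - t ^ 2 ≠ 0 := (one_sub_sq_pos_of_abs_lt_one ht).ne'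
  have hP := hasDerivAt_hyp2F1R_sq (1/3) (2/3) (1/2) ht
  norm_num at hP
  refine hP.congr_deriv ?_
  rw [seriesSolDeriv, seriesSol, eq_div_iff h₁]
  linear_combination t * one_sub_mul_hyp2F1R_four_thirds hx

theorem hasDerivAt_arcsin_div_three {t : ℝ} (ht : |t| < 1) :
    HasDerivAt (fun s => arcsin s / 3) (1 / √(1 - t ^ 2) / 3) t :=
  (hasDerivAt_arcsin (abs_lt.mp ht).1.ne' (abs_lt.mp ht).2.ne).div_const 3

theorem hasDerivAt_closedSol {t : ℝ} (ht : |t| < 1) :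
    HasDerivAt closedSol (closedSolDeriv t) t := by
  have hs : 0 < √(1 - t ^ 2) := sqrt_pos.mpr (one_sub_sq_pos_of_abs_lt_one ht)
  refine (((hasDerivAt_sin _).comp t (hasDerivAt_arcsin_div_three ht)).const_mul 3).congr_deriv ?_
  rw [closedSolDeriv]
  field_simp

theorem hasDerivAt_closedSolDeriv {t : ℝ} (ht : |t| < 1) :
    HasDerivAt closedSolDeriv ((t * closedSolDeriv t - closedSol t / 9) / (1 - t ^ 2)) t := by
  have hpos : 0 < 1 - t ^ 2 := one_sub_sq_pos_of_abs_lt_one ht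
  have hs : 0 < √(1 - t ^ 2) := sqrt_pos.mpr hpos
  have hs2 : √(1 - t ^ 2) ^ 2 = 1 - t ^ 2 := sq_sqrt hpos.le
  have hcos := (hasDerivAt_cos _).comp t (hasDerivAt_arcsin_div_three ht)
  refine (hcos.div (((hasDerivAt_sq t).const_sub 1).sqrt hpos.ne') hs.ne').congr_deriv ?_
  rw [closedSolDeriv, closedSol, Function.comp_apply]
  field_simp
  linear_combination
    (9 * sin (arcsin t / 3) * √(1 - t ^ 2) - 27 * t * cos (arcsin t / 3)) * hs2

theorem seriesSol_eq_closedSol {t : ℝ} (ht : |t| < 1) :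
    seriesSol t = closedSol t ∧ seriesSolDeriv t = closedSolDeriv t := by
  have h := chebyshev_ode_solution_eq_zero (c := 1 / 9) (by norm_num)
    (y := fun s => seriesSol s - closedSol s) (y' := fun s => seriesSolDeriv s - closedSolDeriv s)
    (fun s hs => (hasDerivAt_seriesSol hs).sub (hasDerivAt_closedSol hs))
    (fun s hs => ((hasDerivAt_seriesSolDeriv hs).sub
      (hasDerivAt_closedSolDeriv hs)).congr_deriv (by ring))
    (by simp [seriesSol, closedSol]) (by simp [seriesSolDeriv, closedSolDeriv, hyp2F1R_zero]) ht
  simpa [sub_eq_zero] using h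

theorem hyp2F1R_neg_half_sq {t : ℝ} (ht : |t| < 1) :
    hyp2F1R (1/3) (2/3) (-1/2) (t ^ 2) =
      closedSolDeriv t - t * ((t * closedSolDeriv t - closedSol t / 9) / (1 - t ^ 2)) := by
  have hx : |t ^ 2| < 1 := by rwa [abs_sq, sq_lt_one_iff_abs_lt_one]
  have h₁ : 1 - t ^ 2 ≠ 0 := (one_sub_sq_pos_of_abs_lt_one ht).ne'
  obtain ⟨hU, hP⟩ := seriesSol_eq_closedSol ht
  rw [← hU, ← hP, seriesSol, seriesSolDeriv, hyp2F1R_neg_half hx]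
  field_simp
  linear_combination (-9 * t ^ 2) * one_sub_mul_hyp2F1R_four_thirds hx

end ThirdTwoThirds

theorem hyp2F1_third_twothirds_neghalf (z : ℝ) (hz0 : 0 < z) (hz1 : z < 1) :
    hyp2F1R (1/3) (2/3) (-1/2) z =
      ((3 - 6 * z) * Real.cos ((1/3) * Real.arcsin (Real.sqrt z)) +
        Real.sqrt (z * (1 - z)) * Real.sin ((1/3) * Real.arcsin (Real.sqrt z))) /
      (3 * (1 - z) ^ ((3 : ℝ)/2)) := by
  have ht2 : √z ^ 2 = z := sq_sqrt hz0.le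
  have ht : |√z| < 1 := by
    rw [abs_of_nonneg (sqrt_nonneg z), sqrt_lt' one_pos]; linarith
  have hz : 1 - z ≠ 0 := by linarith
  have hw2 : √(1 - z) ^ 2 = 1 - z := sq_sqrt (by linarith)
  have hw : 0 < √(1 - z) := sqrt_pos.mpr (by linarith)
  have hpow : (1 - z) ^ ((3 : ℝ) / 2) = √(1 - z) ^ 3 := by
    rw [sqrt_eq_rpow, ← rpow_natCast, ← rpow_mul (by linarith)]
    norm_num
  rw [← ht2, ThirdTwoThirds.hyp2F1R_neg_half_sq ht, ThirdTwoThirds.closedSolDeriv,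
    ThirdTwoThirds.closedSol, ht2, sqrt_mul hz0.le, hpow, one_div_mul_eq_div]
  field_simp
  set C := cos (arcsin √z / 3)
  set S := sin (arcsin √z / 3)
  linear_combination 3 * (9 * C * (1 - z) - 9 * C * √z ^ 2 + 3 * √(1 - z) * √z * S) * hw2 -
    27 * C * (1 - z) * ht2
end
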